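/- Let H be an n×n real symmetric matrix with eigenvalues λ_1 ≤ ⋯ ≤ λ_n (counted with multiplicity) and corresponding orthonormal eigenvectors φ_1, …, φ_n, and let 1 ≤ N < n. Then for every P ∈ C_N, writing s_j = φ_jᵀ P φ_j, one has tr(HP) − Σ_{j=1}^N λ_j ≥ (λ_{N+1} − λ_N) · Σ_{j=1}^N (1 − s_j). -/

import Mathlib

/-!
In the eigenbasis `φ`, `tr(HP) = ∑ λ_j s_j` with `0 ≤ s_j ≤ 1` and `∑ s_j = tr P = N`.
Relative to `∑_{j ≤ N} λ_j`, the weights lose the mass `∑_{j ≤ N} (1 - s_j)` on eigenvalues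
`≤ λ_N` and place exactly the same mass on eigenvalues `≥ λ_{N+1}`, which gains at least the
gap times that mass.
-/

open Matrix BigOperators

/-- The convex set of admissible density matrices: symmetric, trace `N`,
with both `P` and `1 - P` positive semidefinite. -/
def CN (n N : ℕ) : Set (Matrix (Fin n) (Fin n) ℝ) :=
  {P | P.IsSymm ∧ P.trace = (N : ℝ) ∧ P.PosSemidef ∧
    ((1 : Matrix (Fin n) (Fin n) ℝ) - P).PosSemidef}

open Finset

namespace Matrix

variable {ι R : Type*} [Fintype ι] [CommRing R]

theorem of_mul_transpose_eq_one [DecidableEq ι] {φ : ι → ι → R}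
    (horth : ∀ i j, φ i ⬝ᵥ φ j = if i = j then 1 else 0) :
    of φ * (of φ)ᵀ = 1 := by
  ext i j
  rw [mul_apply', one_apply]
  exact horth i j

theorem trace_eq_sum_dotProduct_mulVec_of_orthonormal [DecidableEq ι] {φ : ι → ι → R}
    (horth : ∀ i j, φ i ⬝ᵥ φ j = if i = j then 1 else 0) (A : Matrix ι ι R) :
    A.trace = ∑ j, φ j ⬝ᵥ A *ᵥ φ j := by
  have hU : (of φ)ᵀ * of φ = 1 := mul_eq_one_comm.mp (of_mul_transpose_eq_one horth)
  calc A.trace = (of φ * A * (of φ)ᵀ).trace := by rw [trace_mul_cycle, hU, one_mul]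
    _ = ∑ j, φ j ⬝ᵥ A *ᵥ φ j := by
      refine sum_congr rfl fun j _ => ?_
      rw [diag_apply, mul_apply', dotProduct_mulVec]
      congr 1

theorem dotProduct_mul_mulVec_of_mulVec_eq_smul {H : Matrix ι ι R} (hH : H.IsSymm)
    (P : Matrix ι ι R) {v : ι → R} {μ : R} (hv : H *ᵥ v = μ • v) :
    v ⬝ᵥ (H * P) *ᵥ v = μ * (v ⬝ᵥ P *ᵥ v) := by
  rw [← mulVec_mulVec, dotProduct_mulVec, ← mulVec_transpose, hH.eq, hv, smul_dotProduct,
    smul_eq_mul]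

theorem PosSemidef.dotProduct_mulVec_le_of_one_sub [DecidableEq ι] {P : Matrix ι ι ℝ}
    (h : (1 - P).PosSemidef) (v : ι → ℝ) :
    v ⬝ᵥ P *ᵥ v ≤ v ⬝ᵥ v := by
  simpa [sub_mulVec, dotProduct_sub] using h.dotProduct_mulVec_nonneg v

end Matrix

theorem sub_mul_sum_one_sub_le_sum_mul_sub_sum {ι : Type*} [Fintype ι] [DecidableEq ι]
    {T : Finset ι} {lam s : ι → ℝ} {a b : ℝ}
    (hlo : ∀ j ∈ T, lam j ≤ a) (hhi : ∀ j ∉ T, b ≤ lam j)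
    (hs_le : ∀ j ∈ T, s j ≤ 1) (hs_nonneg : ∀ j ∉ T, 0 ≤ s j) (hsum : ∑ j, s j = #T) :
    (b - a) * ∑ j ∈ T, (1 - s j) ≤ ∑ j, lam j * s j - ∑ j ∈ T, lam j := by
  have hcompl : ∑ j ∈ Tᶜ, s j = ∑ j ∈ T, (1 - s j) := by
    rw [sum_sub_distrib, sum_const, nsmul_one, ← hsum, ← sum_add_sum_compl T s]
    ring
  calc (b - a) * ∑ j ∈ T, (1 - s j) = ∑ j ∈ Tᶜ, b * s j - ∑ j ∈ T, a * (1 - s j) := by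
        rw [← mul_sum, ← mul_sum, hcompl]; ring
    _ ≤ ∑ j ∈ Tᶜ, lam j * s j - ∑ j ∈ T, lam j * (1 - s j) := by
        refine sub_le_sub (sum_le_sum fun j hj => ?_) (sum_le_sum fun j hj => ?_)
        · rw [mem_compl] at hj
          exact mul_le_mul_of_nonneg_right (hhi j hj) (hs_nonneg j hj)
        · exact mul_le_mul_of_nonneg_right (hlo j hj) (sub_nonneg.mpr (hs_le j hj))
    _ = ∑ j, lam j * s j - ∑ j ∈ T, lam j := by
        rw [← sum_add_sum_compl T fun j => lam j * s j]
        simp only [mul_sub, mul_one, sum_sub_distrib]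
        ring

/-- For every `P ∈ C_N`, writing `s_j = φ_jᵀ P φ_j`, one has
`tr(HP) − ∑_{j=1}^N λ_j ≥ (λ_{N+1} − λ_N) ∑_{j=1}^N (1 − s_j)`. -/
theorem stmt4 {n N : ℕ} (hNn : N < n)
    (H : Matrix (Fin n) (Fin n) ℝ) (hH : H.IsSymm)
    (lam : Fin n → ℝ) (hmono : Monotone lam)
    (φ : Fin n → Fin n → ℝ)
    (horth : ∀ i j, φ i ⬝ᵥ φ j = if i = j then (1 : ℝ) else 0)
    (heig : ∀ i, H.mulVec (φ i) = lam i • φ i)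
    (P : Matrix (Fin n) (Fin n) ℝ) (hP : P ∈ CN n N)
    (s : Fin n → ℝ) (hs : ∀ j, s j = φ j ⬝ᵥ P.mulVec (φ j)) :
    (H * P).trace - (∑ j ∈ Finset.univ.filter (fun j : Fin n => (j : ℕ) < N), lam j) ≥
      (lam ⟨N, hNn⟩ - lam ⟨N - 1, by omega⟩) *
        ∑ j ∈ Finset.univ.filter (fun j : Fin n => (j : ℕ) < N), (1 - s j) := by
  obtain ⟨-, hPtr, hPpsd, hIPpsd⟩ := hP
  have htrace : (H * P).trace = ∑ j, lam j * s j := by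
    rw [trace_eq_sum_dotProduct_mulVec_of_orthonormal horth]
    exact sum_congr rfl fun j _ => by
      rw [dotProduct_mul_mulVec_of_mulVec_eq_smul hH P (heig j), hs]
  have hsum : ∑ j, s j = #{j : Fin n | (j : ℕ) < N} := by
    rw [Fin.card_filter_val_lt, min_eq_right hNn.le, ← hPtr,
      trace_eq_sum_dotProduct_mulVec_of_orthonormal horth]
    exact sum_congr rfl fun j _ => hs j
  rw [htrace]
  refine sub_mul_sum_one_sub_le_sum_mul_sub_sum (fun j hj => hmono ?_) (fun j hj => hmono ?_)
    (fun j _ => ?_) (fun j _ => ?_) hsum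
  · simp only [mem_filter, mem_univ, true_and] at hj
    exact Fin.mk_le_mk.mpr (by omega)
  · simp only [mem_filter, mem_univ, true_and] at hj
    exact Fin.mk_le_mk.mpr (by omega)
  · rw [hs]
    exact (hIPpsd.dotProduct_mulVec_le_of_one_sub _).trans_eq (by simpa using horth j j)
  · rw [hs]
    simpa using hPpsd.dotProduct_mulVec_nonneg (φ j)
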